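/- arXiv:1810.13328 — 2 statements merged into one kernel-verified Lean document; each statement's English description precedes it below -/
import Mathlib

section
/- Let G and H be finite simple graphs. Then G and H are both stable in respect of chromatic completion (SCC) if and only if the join G + H is stable in respect of chromatic completion. -/
/-- A proper vertex colouring of `G`: adjacent vertices get distinct colours. -/
def IsProperColoring {V : Type} (G : SimpleGraph V) (c : V → ℕ) : Prop :=
  ∀ u v : V, G.Adj u v → c u ≠ c v

/-- The number of colours used by a colouring. -/
def colorCount {V : Type} [Fintype V] (c : V → ℕ) : ℕ :=
  (Finset.univ.image c).card

/-- A chromatic colouring: a proper colouring using exactly `χ(G)` colours,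
i.e. a proper colouring using the minimum possible number of colours. -/
def IsChromaticColoring {V : Type} [Fintype V] (G : SimpleGraph V) (c : V → ℕ) : Prop :=
  IsProperColoring G c ∧
    ∀ c' : V → ℕ, IsProperColoring G c' → colorCount c ≤ colorCount c'

/-- The chromatic completion edges of a colouring `c`: all unordered pairs of
distinct non-adjacent vertices receiving distinct colours. -/
def completionEdges {V : Type} (G : SimpleGraph V) (c : V → ℕ) : Set (Sym2 V) :=
  {e | ∃ u v : V, e = s(u, v) ∧ u ≠ v ∧ ¬ G.Adj u v ∧ c u ≠ c v}

/-- The completion count `N(c)`. -/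
noncomputable def completionCount {V : Type} (G : SimpleGraph V) (c : V → ℕ) : ℕ :=
  (completionEdges G c).ncard

/-- The chromatic completion number `ζ(G)`. -/
noncomputable def zeta {V : Type} [Fintype V] (G : SimpleGraph V) : ℕ :=
  sSup {n | ∃ c : V → ℕ, IsChromaticColoring G c ∧ completionCount G c = n}

/-- A Lucky colouring: a chromatic colouring attaining `ζ(G)`. -/
def IsLucky {V : Type} [Fintype V] (G : SimpleGraph V) (c : V → ℕ) : Prop :=
  IsChromaticColoring G c ∧ completionCount G c = zeta G

/-- `G` is stable in respect of chromatic completion: all Lucky colourings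
induce the same partition of the vertex set into colour classes. -/
def SCC {V : Type} [Fintype V] (G : SimpleGraph V) : Prop :=
  ∀ c₁ c₂ : V → ℕ, IsLucky G c₁ → IsLucky G c₂ →
    ∀ u v : V, (c₁ u = c₁ v ↔ c₂ u = c₂ v)

/-- The join `G + H`: the disjoint union of `G` and `H` together with all edges
between vertices of `G` and vertices of `H`. -/
def graphJoin {V W : Type} (G : SimpleGraph V) (H : SimpleGraph W) :
    SimpleGraph (V ⊕ W) where
  Adj x y :=
    match x, y with
    | Sum.inl a, Sum.inl b => G.Adj a b
    | Sum.inr a, Sum.inr b => H.Adj a b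
    | Sum.inl _, Sum.inr _ => True
    | Sum.inr _, Sum.inl _ => True
  symm := by
    constructor
    rintro (a | a) (b | b) h
    · exact h.symm
    · trivial
    · trivial
    · exact h.symm
  loopless := by
    constructor
    rintro (a | a) h
    · exact G.irrefl h
    · exact H.irrefl h

section Aux
variable {V W : Type} [Fintype V] [Fintype W]

lemma exists_chromatic (G : SimpleGraph V) : ∃ c, IsChromaticColoring G c := by
  classical
  set S : Set ℕ := {n | ∃ c : V → ℕ, IsProperColoring G c ∧ colorCount c = n} with hS
  have hinj : Function.Injective (fun v => ((Fintype.equivFin V v : ℕ))) :=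
    fun a b h => (Fintype.equivFin V).injective (Fin.val_injective h)
  have hne : S.Nonempty :=
    ⟨_, (fun v => ((Fintype.equivFin V v : ℕ))), fun u v huv h => huv.ne (hinj h), rfl⟩
  obtain ⟨c, hc, hcc⟩ := Nat.sInf_mem hne
  exact ⟨c, hc, fun c' hc' => hcc ▸ Nat.sInf_le ⟨c', hc', rfl⟩⟩

lemma completionCount_le (G : SimpleGraph V) (c : V → ℕ) :
    completionCount G c ≤ Nat.card (Sym2 V) := by
  rw [completionCount, ← Set.ncard_univ]
  exact Set.ncard_le_ncard (Set.subset_univ _) Set.finite_univ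

lemma zeta_bdd (G : SimpleGraph V) :
    BddAbove {n | ∃ c : V → ℕ, IsChromaticColoring G c ∧ completionCount G c = n} := by
  refine ⟨Nat.card (Sym2 V), ?_⟩
  rintro n ⟨c, _, rfl⟩
  exact completionCount_le G c

lemma exists_lucky (G : SimpleGraph V) : ∃ c, IsLucky G c := by
  have hne : {n | ∃ c : V → ℕ, IsChromaticColoring G c ∧ completionCount G c = n}.Nonempty := by
    obtain ⟨c, hc⟩ := exists_chromatic G
    exact ⟨_, c, hc, rfl⟩
  obtain ⟨c, hc, hcc⟩ := Nat.sSup_mem hne (zeta_bdd G)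
  exact ⟨c, hc, hcc⟩

lemma completionCount_le_zeta (G : SimpleGraph V) {c : V → ℕ}
    (hc : IsChromaticColoring G c) : completionCount G c ≤ zeta G :=
  le_csSup (zeta_bdd G) ⟨c, hc, rfl⟩

end Aux

section Join
variable {V W : Type} [Fintype V] [Fintype W]

lemma proper_join_iff (G : SimpleGraph V) (H : SimpleGraph W) (c : V ⊕ W → ℕ) :
    IsProperColoring (graphJoin G H) c ↔
      IsProperColoring G (c ∘ Sum.inl) ∧ IsProperColoring H (c ∘ Sum.inr) ∧
        ∀ a b, c (Sum.inl a) ≠ c (Sum.inr b) := by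
  constructor
  · intro h
    exact ⟨fun u v huv => h _ _ huv, fun u v huv => h _ _ huv, fun a b => h _ _ trivial⟩
  · rintro ⟨h1, h2, h3⟩ (a|a) (b|b) hab
    · exact h1 a b hab
    · exact h3 a b
    · exact fun h => h3 b a h.symm
    · exact h2 a b hab

lemma image_sum (c : V ⊕ W → ℕ) :
    Finset.univ.image c =
      (Finset.univ.image (c ∘ Sum.inl)) ∪ (Finset.univ.image (c ∘ Sum.inr)) := by
  ext n
  simp only [Finset.mem_image, Finset.mem_union, Finset.mem_univ, true_and, Function.comp]
  constructor
  · rintro ⟨(a|a), rfl⟩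
    · exact Or.inl ⟨a, rfl⟩
    · exact Or.inr ⟨a, rfl⟩
  · rintro (⟨a, rfl⟩ | ⟨a, rfl⟩)
    · exact ⟨Sum.inl a, rfl⟩
    · exact ⟨Sum.inr a, rfl⟩

lemma colorCount_sum (c : V ⊕ W → ℕ)
    (hdisj : ∀ a b, c (Sum.inl a) ≠ c (Sum.inr b)) :
    colorCount c = colorCount (c ∘ Sum.inl) + colorCount (c ∘ Sum.inr) := by
  unfold colorCount
  rw [image_sum, Finset.card_union_of_disjoint]
  rw [Finset.disjoint_left]
  rintro n hn hn'
  simp only [Finset.mem_image, Finset.mem_univ, true_and, Function.comp] at hn hn'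
  obtain ⟨a, rfl⟩ := hn; obtain ⟨b, hb⟩ := hn'
  exact hdisj a b hb.symm

lemma completionEdges_join (G : SimpleGraph V) (H : SimpleGraph W) (c : V ⊕ W → ℕ) :
    completionEdges (graphJoin G H) c =
      Sym2.map Sum.inl '' completionEdges G (c ∘ Sum.inl) ∪
      Sym2.map Sum.inr '' completionEdges H (c ∘ Sum.inr) := by
  ext e
  constructor
  · rintro ⟨(a|a), (b|b), rfl, hne, hadj, hc⟩
    · exact Or.inl ⟨s(a,b), ⟨a, b, rfl, fun h => hne (by rw [h]), hadj, hc⟩,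
        (Sym2.map_pair_eq _ _ _)⟩
    · exact absurd trivial hadj
    · exact absurd trivial hadj
    · exact Or.inr ⟨s(a,b), ⟨a, b, rfl, fun h => hne (by rw [h]), hadj, hc⟩,
        (Sym2.map_pair_eq _ _ _)⟩
  · rintro (⟨e', ⟨a, b, rfl, hne, hadj, hc⟩, rfl⟩ | ⟨e', ⟨a, b, rfl, hne, hadj, hc⟩, rfl⟩)
    · exact ⟨Sum.inl a, Sum.inl b, (Sym2.map_pair_eq _ _ _),
        fun h => hne (Sum.inl.inj h), hadj, hc⟩
    · exact ⟨Sum.inr a, Sum.inr b, (Sym2.map_pair_eq _ _ _),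
        fun h => hne (Sum.inr.inj h), hadj, hc⟩

lemma completionCount_join (G : SimpleGraph V) (H : SimpleGraph W) (c : V ⊕ W → ℕ) :
    completionCount (graphJoin G H) c =
      completionCount G (c ∘ Sum.inl) + completionCount H (c ∘ Sum.inr) := by
  unfold completionCount
  rw [completionEdges_join, Set.ncard_union_eq ?_ (Set.toFinite _) (Set.toFinite _),
    Set.ncard_image_of_injective _ (Sym2.map.injective Sum.inl_injective),
    Set.ncard_image_of_injective _ (Sym2.map.injective Sum.inr_injective)]
  rw [Set.disjoint_left]
  rintro e ⟨e1, -, rfl⟩ ⟨e2, -, he⟩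
  induction e1 with
  | h a b =>
    induction e2 with
    | h x y =>
      rw [Sym2.map_pair_eq, Sym2.map_pair_eq, Sym2.eq_iff] at he
      rcases he with ⟨h, -⟩ | ⟨h, -⟩ <;> exact Sum.inl_ne_inr h.symm

end Join

set_option linter.unusedSectionVars false

section Relabel
variable {V : Type} [Fintype V]

lemma relabel_proper (G : SimpleGraph V) {f : ℕ → ℕ} (hf : Function.Injective f)
    (c : V → ℕ) : IsProperColoring G (f ∘ c) ↔ IsProperColoring G c := by
  constructor
  · intro h u v huv hc
    exact h u v huv (by simp [Function.comp, hc])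
  · intro h u v huv hc
    exact h u v huv (hf hc)

lemma relabel_colorCount {f : ℕ → ℕ} (hf : Function.Injective f) (c : V → ℕ) :
    colorCount (f ∘ c) = colorCount c := by
  unfold colorCount
  rw [← Finset.image_image, Finset.card_image_of_injective _ hf]

lemma relabel_completionEdges (G : SimpleGraph V) {f : ℕ → ℕ} (hf : Function.Injective f)
    (c : V → ℕ) : completionEdges G (f ∘ c) = completionEdges G c := by
  ext e
  constructor
  · rintro ⟨u, v, rfl, hne, hadj, hc⟩
    exact ⟨u, v, rfl, hne, hadj, fun h => hc (by simp [Function.comp, h])⟩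
  · rintro ⟨u, v, rfl, hne, hadj, hc⟩
    exact ⟨u, v, rfl, hne, hadj, fun h => hc (hf h)⟩

lemma relabel_chromatic (G : SimpleGraph V) {f : ℕ → ℕ} (hf : Function.Injective f)
    (c : V → ℕ) : IsChromaticColoring G (f ∘ c) ↔ IsChromaticColoring G c := by
  unfold IsChromaticColoring
  rw [relabel_proper G hf, relabel_colorCount hf]

lemma relabel_completionCount (G : SimpleGraph V) {f : ℕ → ℕ} (hf : Function.Injective f)
    (c : V → ℕ) : completionCount G (f ∘ c) = completionCount G c := by
  unfold completionCount; rw [relabel_completionEdges G hf]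

lemma chromatic_count_eq (G : SimpleGraph V) {c c' : V → ℕ}
    (hc : IsChromaticColoring G c) (hc' : IsChromaticColoring G c') :
    colorCount c = colorCount c' :=
  le_antisymm (hc.2 c' hc'.1) (hc'.2 c hc.1)

end Relabel

section Combine
variable {V W : Type} [Fintype V] [Fintype W]

/-- Combine colourings of `V` and `W` with disjoint colour ranges. -/
def combine (cG : V → ℕ) (cH : W → ℕ) : V ⊕ W → ℕ :=
  Sum.elim cG (fun w => cH w + ((Finset.univ.image cG).sup id + 1))

lemma combine_inl (cG : V → ℕ) (cH : W → ℕ) :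
    combine cG cH ∘ Sum.inl = cG := rfl

lemma combine_inr (cG : V → ℕ) (cH : W → ℕ) :
    combine cG cH ∘ Sum.inr = (fun n => n + ((Finset.univ.image cG).sup id + 1)) ∘ cH := rfl

lemma combine_disjoint (cG : V → ℕ) (cH : W → ℕ) :
    ∀ a b, combine cG cH (Sum.inl a) ≠ combine cG cH (Sum.inr b) := by
  intro a b h
  have h1 : cG a ≤ (Finset.univ.image cG).sup id :=
    Finset.le_sup (f := id) (Finset.mem_image_of_mem cG (Finset.mem_univ a))
  simp only [combine, Sum.elim_inl, Sum.elim_inr] at h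
  omega

lemma shift_inj (K : ℕ) : Function.Injective (fun n => n + K) := fun a b h => Nat.add_right_cancel h

lemma combine_chromatic {G : SimpleGraph V} {H : SimpleGraph W} {cG : V → ℕ} {cH : W → ℕ}
    (hG : IsChromaticColoring G cG) (hH : IsChromaticColoring H cH) :
    IsChromaticColoring (graphJoin G H) (combine cG cH) := by
  have hinr : IsChromaticColoring H (combine cG cH ∘ Sum.inr) := by
    rw [combine_inr, relabel_chromatic H (shift_inj _)]; exact hH
  constructor
  · rw [proper_join_iff]
    exact ⟨hG.1, hinr.1, combine_disjoint cG cH⟩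
  · intro c' hc'
    rw [proper_join_iff] at hc'
    rw [colorCount_sum _ (combine_disjoint cG cH), colorCount_sum c' hc'.2.2,
      combine_inl, combine_inr, relabel_colorCount (shift_inj _)]
    exact Nat.add_le_add (hG.2 _ hc'.1) (hH.2 _ hc'.2.1)

lemma chromatic_join_restrict {G : SimpleGraph V} {H : SimpleGraph W} {c : V ⊕ W → ℕ}
    (hc : IsChromaticColoring (graphJoin G H) c) :
    IsChromaticColoring G (c ∘ Sum.inl) ∧ IsChromaticColoring H (c ∘ Sum.inr) := by
  obtain ⟨cG, hcG⟩ := exists_chromatic G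
  obtain ⟨cH, hcH⟩ := exists_chromatic H
  have hp := (proper_join_iff G H c).mp hc.1
  have hle := hc.2 _ (combine_chromatic hcG hcH).1
  rw [colorCount_sum _ (combine_disjoint cG cH), combine_inl, combine_inr,
    relabel_colorCount (shift_inj _), colorCount_sum c hp.2.2] at hle
  have h1 : colorCount cG ≤ colorCount (c ∘ Sum.inl) := hcG.2 _ hp.1
  have h2 : colorCount cH ≤ colorCount (c ∘ Sum.inr) := hcH.2 _ hp.2.1
  have e1 : colorCount (c ∘ Sum.inl) = colorCount cG := by omega
  have e2 : colorCount (c ∘ Sum.inr) = colorCount cH := by omega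
  exact ⟨⟨hp.1, fun c'' h'' => e1 ▸ hcG.2 c'' h''⟩,
         ⟨hp.2.1, fun c'' h'' => e2 ▸ hcH.2 c'' h''⟩⟩

lemma zeta_join (G : SimpleGraph V) (H : SimpleGraph W) :
    zeta (graphJoin G H) = zeta G + zeta H := by
  apply le_antisymm
  · obtain ⟨c0, hc0⟩ := exists_chromatic (graphJoin G H)
    refine csSup_le ⟨completionCount (graphJoin G H) c0, c0, hc0, rfl⟩ ?_
    rintro n ⟨c, hc, rfl⟩
    obtain ⟨h1, h2⟩ := chromatic_join_restrict hc
    rw [completionCount_join]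
    exact Nat.add_le_add (completionCount_le_zeta G h1) (completionCount_le_zeta H h2)
  · obtain ⟨cG, hcG, hzG⟩ := exists_lucky G
    obtain ⟨cH, hcH, hzH⟩ := exists_lucky H
    apply le_csSup (zeta_bdd _)
    refine ⟨combine cG cH, combine_chromatic hcG hcH, ?_⟩
    rw [completionCount_join, combine_inl, combine_inr,
      relabel_completionCount H (shift_inj _), hzG, hzH]

lemma lucky_combine {G : SimpleGraph V} {H : SimpleGraph W} {cG : V → ℕ} {cH : W → ℕ}
    (hG : IsLucky G cG) (hH : IsLucky H cH) :
    IsLucky (graphJoin G H) (combine cG cH) := by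
  refine ⟨combine_chromatic hG.1 hH.1, ?_⟩
  rw [completionCount_join, combine_inl, combine_inr,
    relabel_completionCount H (shift_inj _), hG.2, hH.2, zeta_join]

lemma lucky_join_restrict {G : SimpleGraph V} {H : SimpleGraph W} {c : V ⊕ W → ℕ}
    (hc : IsLucky (graphJoin G H) c) :
    IsLucky G (c ∘ Sum.inl) ∧ IsLucky H (c ∘ Sum.inr) := by
  obtain ⟨h1, h2⟩ := chromatic_join_restrict hc.1
  have hcc := hc.2
  rw [completionCount_join, zeta_join] at hcc
  have b1 := completionCount_le_zeta G h1
  have b2 := completionCount_le_zeta H h2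
  exact ⟨⟨h1, by omega⟩, ⟨h2, by omega⟩⟩

end Combine

/-- `G` and `H` are both SCC iff the join `G + H` is SCC. -/
theorem scc_join_iff {V W : Type} [Fintype V] [Fintype W]
    (G : SimpleGraph V) (H : SimpleGraph W) :
    (SCC G ∧ SCC H) ↔ SCC (graphJoin G H) := by
  constructor
  · rintro ⟨hG, hH⟩ c₁ c₂ h₁ h₂ u v
    obtain ⟨h₁l, h₁r⟩ := lucky_join_restrict h₁
    obtain ⟨h₂l, h₂r⟩ := lucky_join_restrict h₂
    have p₁ := (proper_join_iff G H c₁).mp h₁.1.1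
    have p₂ := (proper_join_iff G H c₂).mp h₂.1.1
    match u, v with
    | Sum.inl a, Sum.inl b => exact hG _ _ h₁l h₂l a b
    | Sum.inr a, Sum.inr b => exact hH _ _ h₁r h₂r a b
    | Sum.inl a, Sum.inr b =>
      exact ⟨fun h => absurd h (p₁.2.2 a b), fun h => absurd h (p₂.2.2 a b)⟩
    | Sum.inr a, Sum.inl b =>
      exact ⟨fun h => absurd h.symm (p₁.2.2 b a), fun h => absurd h.symm (p₂.2.2 b a)⟩
  · intro hJ
    constructor
    · intro c₁ c₂ h₁ h₂ u v
      obtain ⟨d, hd⟩ := exists_lucky H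
      have := hJ _ _ (lucky_combine h₁ hd) (lucky_combine h₂ hd) (Sum.inl u) (Sum.inl v)
      simpa [combine] using this
    · intro c₁ c₂ h₁ h₂ u v
      obtain ⟨d, hd⟩ := exists_lucky G
      have := hJ _ _ (lucky_combine hd h₁) (lucky_combine hd h₂) (Sum.inr u) (Sum.inr v)
      simpa [combine] using this
end

section
/- Let G and H be finite simple graphs, each with at least one edge. Then ζ(G ∪ H) ≥ ζ(G + H), where G ∪ H is the disjoint union and G + H is the join of G and H. -/
noncomputable def enc (s : Finset ℕ) (x : ℕ) : ℕ :=
  if h : x ∈ s then ((s.orderIsoOfFin rfl).symm ⟨x, h⟩ : Fin s.card).val else 0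

lemma enc_lt {s : Finset ℕ} {x : ℕ} (h : x ∈ s) : enc s x < s.card := by
  rw [enc, dif_pos h]; exact ((s.orderIsoOfFin rfl).symm ⟨x, h⟩).isLt

lemma enc_inj {s : Finset ℕ} {x y : ℕ} (hx : x ∈ s) (hy : y ∈ s)
    (h : enc s x = enc s y) : x = y := by
  simp only [enc, dif_pos hx, dif_pos hy] at h
  have := (s.orderIsoOfFin rfl).symm.injective (Fin.val_injective h)
  exact Subtype.ext_iff.mp this

/-- For finite simple graphs `G` and `H`, each with at least one edge,
`ζ(G ∪ H) ≥ ζ(G + H)`. -/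
theorem zeta_union_ge_zeta_join {V W : Type} [Fintype V] [Fintype W]
    (G : SimpleGraph V) (H : SimpleGraph W)
    (hG : G.edgeSet.Nonempty) (hH : H.edgeSet.Nonempty) :
    zeta (graphJoin G H) ≤ zeta (G ⊕g H) := by
  classical
  set J := graphJoin G H with hJ
  set U := G ⊕g H with hU
  have key : ∀ n ∈ {n | ∃ c : V ⊕ W → ℕ, IsChromaticColoring J c ∧ completionCount J c = n},
      n ≤ zeta U := by
    rintro n ⟨c, hc, rfl⟩
    set cV : V → ℕ := fun a => c (Sum.inl a) with hcV
    set cW : W → ℕ := fun b => c (Sum.inr b) with hcW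
    set sV : Finset ℕ := Finset.univ.image cV with hsV
    set sW : Finset ℕ := Finset.univ.image cW with hsW
    -- cross adjacency in J
    have hcross : ∀ (a : V) (b : W), J.Adj (Sum.inl a) (Sum.inr b) := by
      intro a b; exact trivial
    have hVadj : ∀ a b : V, G.Adj a b → J.Adj (Sum.inl a) (Sum.inl b) := fun a b h => h
    have hWadj : ∀ a b : W, H.Adj a b → J.Adj (Sum.inr a) (Sum.inr b) := fun a b h => h
    have hdis : Disjoint sV sW := by
      rw [Finset.disjoint_left]
      rintro x hx hx'
      simp only [hsV, hsW, Finset.mem_image, Finset.mem_univ, true_and] at hx hx'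
      obtain ⟨a, rfl⟩ := hx
      obtain ⟨b, hb⟩ := hx'
      exact hc.1 _ _ (hcross a b) hb.symm
    have himage : Finset.univ.image c = sV ∪ sW := by
      ext x
      simp only [hsV, hsW, Finset.mem_image, Finset.mem_union, Finset.mem_univ, true_and]
      constructor
      · rintro ⟨(a | b), rfl⟩
        exacts [Or.inl ⟨a, rfl⟩, Or.inr ⟨b, rfl⟩]
      · rintro (⟨a, rfl⟩ | ⟨b, rfl⟩)
        exacts [⟨Sum.inl a, rfl⟩, ⟨Sum.inr b, rfl⟩]
    have hcount : colorCount c = sV.card + sW.card := by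
      rw [colorCount, himage, Finset.card_union_of_disjoint hdis]
    -- minimality of sV.card among proper colorings of G
    have hminG : ∀ d : V → ℕ, IsProperColoring G d → sV.card ≤ colorCount d := by
      intro d hd
      set M : ℕ := (Finset.univ.image d).sup id + 1 with hM
      have hdM : ∀ a, d a < M :=
        fun a => Nat.lt_succ_of_le (Finset.le_sup (f := id)
          (Finset.mem_image_of_mem d (Finset.mem_univ a)))
      set e : V ⊕ W → ℕ := fun x => match x with
        | Sum.inl a => d a
        | Sum.inr b => cW b + M with he
      have heprop : IsProperColoring J e := by
        rintro (a | a) (b | b) hab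
        · exact hd a b hab
        · exact Nat.ne_of_lt (lt_of_lt_of_le (hdM a) (Nat.le_add_left M _))
        · exact (Nat.ne_of_lt (lt_of_lt_of_le (hdM b) (Nat.le_add_left M _))).symm
        · intro hx
          exact hc.1 _ _ (hWadj a b hab) (Nat.add_right_cancel hx)
      have himg : Finset.univ.image e = Finset.univ.image d ∪ sW.image (· + M) := by
        ext x
        simp only [Finset.mem_image, Finset.mem_union, Finset.mem_univ, true_and, hsW]
        constructor
        · rintro ⟨(a | b), rfl⟩
          · exact Or.inl ⟨a, rfl⟩
          · exact Or.inr ⟨cW b, ⟨b, rfl⟩, rfl⟩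
        · rintro (⟨a, rfl⟩ | ⟨y, ⟨b, rfl⟩, rfl⟩)
          exacts [⟨Sum.inl a, rfl⟩, ⟨Sum.inr b, rfl⟩]
      have hdisj2 : Disjoint (Finset.univ.image d) (sW.image (· + M)) := by
        rw [Finset.disjoint_left]
        rintro x hx hx'
        simp only [Finset.mem_image] at hx hx'
        obtain ⟨a, _, rfl⟩ := hx
        obtain ⟨y, _, hy⟩ := hx'
        exact absurd hy (Nat.ne_of_lt (lt_of_lt_of_le (hdM a) (Nat.le_add_left M _))).symm
      have hecard : colorCount e = colorCount d + sW.card := by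
        rw [colorCount, himg, Finset.card_union_of_disjoint hdisj2, colorCount,
          Finset.card_image_of_injective _ (add_left_injective M)]
      have := hc.2 e heprop
      rw [hcount, hecard] at this
      omega
    -- minimality of sW.card among proper colorings of H
    have hminH : ∀ d : W → ℕ, IsProperColoring H d → sW.card ≤ colorCount d := by
      intro d hd
      set M : ℕ := (Finset.univ.image d).sup id + 1 with hM
      have hdM : ∀ b, d b < M :=
        fun b => Nat.lt_succ_of_le (Finset.le_sup (f := id)
          (Finset.mem_image_of_mem d (Finset.mem_univ b)))
      set e : V ⊕ W → ℕ := fun x => match x with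
        | Sum.inl a => cV a + M
        | Sum.inr b => d b with he
      have heprop : IsProperColoring J e := by
        rintro (a | a) (b | b) hab
        · intro hx
          exact hc.1 _ _ (hVadj a b hab) (Nat.add_right_cancel hx)
        · exact (Nat.ne_of_lt (lt_of_lt_of_le (hdM b) (Nat.le_add_left M _))).symm
        · exact Nat.ne_of_lt (lt_of_lt_of_le (hdM a) (Nat.le_add_left M _))
        · exact hd a b hab
      have himg : Finset.univ.image e = sV.image (· + M) ∪ Finset.univ.image d := by
        ext x
        simp only [Finset.mem_image, Finset.mem_union, Finset.mem_univ, true_and, hsV]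
        constructor
        · rintro ⟨(a | b), rfl⟩
          · exact Or.inl ⟨cV a, ⟨a, rfl⟩, rfl⟩
          · exact Or.inr ⟨b, rfl⟩
        · rintro (⟨y, ⟨a, rfl⟩, rfl⟩ | ⟨b, rfl⟩)
          exacts [⟨Sum.inl a, rfl⟩, ⟨Sum.inr b, rfl⟩]
      have hdisj2 : Disjoint (sV.image (· + M)) (Finset.univ.image d) := by
        rw [Finset.disjoint_right]
        rintro x hx hx'
        simp only [Finset.mem_image] at hx hx'
        obtain ⟨b, _, rfl⟩ := hx
        obtain ⟨y, _, hy⟩ := hx'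
        exact absurd hy (Nat.ne_of_lt (lt_of_lt_of_le (hdM b) (Nat.le_add_left M _))).symm
      have hecard : colorCount e = sV.card + colorCount d := by
        rw [colorCount, himg, Finset.card_union_of_disjoint hdisj2, colorCount,
          Finset.card_image_of_injective _ (add_left_injective M)]
      have := hc.2 e heprop
      rw [hcount, hecard] at this
      omega
    -- the new coloring
    set c' : V ⊕ W → ℕ := fun x => match x with
      | Sum.inl a => enc sV (cV a)
      | Sum.inr b => enc sW (cW b) with hc'
    have hmemV : ∀ a : V, cV a ∈ sV := fun a => Finset.mem_image_of_mem cV (Finset.mem_univ a)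
    have hmemW : ∀ b : W, cW b ∈ sW := fun b => Finset.mem_image_of_mem cW (Finset.mem_univ b)
    have hUadj : ∀ x y : V ⊕ W, U.Adj x y ↔ (match x, y with
        | Sum.inl a, Sum.inl b => G.Adj a b
        | Sum.inr a, Sum.inr b => H.Adj a b
        | _, _ => False) := by
      rintro (a | a) (b | b) <;> simp [hU, SimpleGraph.sum_adj]
    have hprop' : IsProperColoring U c' := by
      rintro (a | a) (b | b) hab h
      · exact hc.1 _ _ (hVadj a b ((hUadj _ _).mp hab)) (enc_inj (hmemV a) (hmemV b) h)
      · exact (hUadj _ _).mp hab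
      · exact (hUadj _ _).mp hab
      · exact hc.1 _ _ (hWadj a b ((hUadj _ _).mp hab)) (enc_inj (hmemW a) (hmemW b) h)
    have hcle : colorCount c' ≤ max sV.card sW.card := by
      have hsub : Finset.univ.image c' ⊆ Finset.range (max sV.card sW.card) := by
        intro x hx
        simp only [Finset.mem_image, Finset.mem_univ, true_and] at hx
        obtain ⟨(a | b), rfl⟩ := hx
        · exact Finset.mem_range.mpr (lt_of_lt_of_le (enc_lt (hmemV a)) (le_max_left _ _))
        · exact Finset.mem_range.mpr (lt_of_lt_of_le (enc_lt (hmemW b)) (le_max_right _ _))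
      calc colorCount c' ≤ (Finset.range (max sV.card sW.card)).card :=
            Finset.card_le_card hsub
        _ = max sV.card sW.card := Finset.card_range _
    have hchrom' : IsChromaticColoring U c' := by
      refine ⟨hprop', fun c'' h'' => le_trans hcle (max_le ?_ ?_)⟩
      · have hpV : IsProperColoring G (fun a => c'' (Sum.inl a)) := by
          intro u v h
          exact h'' _ _ ((hUadj _ _).mpr h)
        refine le_trans (hminG _ hpV) (Finset.card_le_card ?_)
        intro x hx
        simp only [Finset.mem_image, Finset.mem_univ, true_and] at hx ⊢
        obtain ⟨a, rfl⟩ := hx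
        exact ⟨Sum.inl a, rfl⟩
      · have hpW : IsProperColoring H (fun b => c'' (Sum.inr b)) := by
          intro u v h
          exact h'' _ _ ((hUadj _ _).mpr h)
        refine le_trans (hminH _ hpW) (Finset.card_le_card ?_)
        intro x hx
        simp only [Finset.mem_image, Finset.mem_univ, true_and] at hx ⊢
        obtain ⟨b, rfl⟩ := hx
        exact ⟨Sum.inr b, rfl⟩
    -- completion edges are preserved
    have hsubE : completionEdges J c ⊆ completionEdges U c' := by
      rintro e ⟨u, v, rfl, huv, hadj, hcol⟩
      refine ⟨u, v, rfl, huv, ?_, ?_⟩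
      · intro h
        match u, v, (hUadj u v).mp h with
        | Sum.inl a, Sum.inl b, h' => exact hadj (hVadj a b h')
        | Sum.inr a, Sum.inr b, h' => exact hadj (hWadj a b h')
      · match u, v with
        | Sum.inl a, Sum.inl b =>
          exact fun h => hcol (enc_inj (hmemV a) (hmemV b) h)
        | Sum.inl a, Sum.inr b => exact absurd (hcross a b) hadj
        | Sum.inr a, Sum.inl b => exact absurd (J.adj_symm (hcross b a)) hadj
        | Sum.inr a, Sum.inr b =>
          exact fun h => hcol (enc_inj (hmemW a) (hmemW b) h)
    have hccle : completionCount J c ≤ completionCount U c' :=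
      Set.ncard_le_ncard hsubE (Set.toFinite _)
    refine le_trans hccle (le_csSup ?_ ⟨c', hchrom', rfl⟩)
    refine ⟨(Set.univ : Set (Sym2 (V ⊕ W))).ncard, ?_⟩
    rintro m ⟨c0, _, rfl⟩
    exact Set.ncard_le_ncard (Set.subset_univ _) Set.finite_univ
  rcases Set.eq_empty_or_nonempty
      {n | ∃ c : V ⊕ W → ℕ, IsChromaticColoring J c ∧ completionCount J c = n} with he | hne
  · rw [zeta, he, csSup_empty]
    exact bot_le

  · exact csSup_le hne key
end
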